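/- Under the stated assumptions, the values c(v,t) form a synchronous Ψ-counter stabilising by round T_W + T_C + 1: for every round t ≥ t0 + T_C + 1 (hence in particular for every t ≥ T_W + T_C + 1) and all correct nodes v, w: c(v,t) = c(w,t) and c(v,t+1) = c(v,t) + 1 mod Ψ. -/

import Mathlib

/-!
From round `t0` on the correct nodes see the same pulses, so a correct node's phase counter
reaches `T_C` in round `s + T_C` (with `s ≥ t0`) exactly when every correct node pulsed in round `s`
and then stayed silent: exactly the start rounds in which consensus is guaranteed. The pulse at `t0`
starts such an instance, and its agreement makes all tentative values `c'` equal in round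
`t0 + T_C`; from then on they stay equal, since both the increment and the overwrite by a common
consensus output preserve agreement. A later instance can only start in a round `s ≥ t0 + Φ ≥ t0 + T_C`,
when the inputs `c'(·, s)` already agree, so validity makes its overwrite `Y + T_C` coincide with
the value the counter has reached anyway; hence from round `t0 + T_C + 1` on `c' = c` and the
counter just increments.
-/
def phaseStep (TC x : ℕ) (δ : Option ℕ) : Option ℕ :=
  if x = 1 then some 1 else δ.bind fun ρ => if ρ < TC then some (ρ + 1) else none

theorem phaseStep_eq_some_succ_iff {TC x k : ℕ} {δ : Option ℕ} :
    phaseStep TC x δ = some (k + 1) ↔ x = 1 ∧ k = 0 ∨ x ≠ 1 ∧ δ = some k ∧ k < TC := by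
  unfold phaseStep
  split_ifs with hx
  · simp [hx]
  · cases δ with
    | none => simp [hx]
    | some ρ => by_cases hρ : ρ < TC <;> simp [hρ, hx] <;> omega

def PulseThenSilent (a : ℕ → ℕ) (s k : ℕ) : Prop :=
  a s = 1 ∧ ∀ σ, s < σ → σ < s + k → a σ = 0

namespace PulseThenSilent

variable {a b : ℕ → ℕ} {s k : ℕ}

theorem mono {l : ℕ} (h : PulseThenSilent a s k) (hlk : l ≤ k) : PulseThenSilent a s l :=
  ⟨h.1, fun σ h₁ h₂ => h.2 σ h₁ (by omega)⟩

theorem succ (h : PulseThenSilent a s k) (hsk : a (s + k) = 0) :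
    PulseThenSilent a s (k + 1) := by
  refine ⟨h.1, fun σ h₁ h₂ => ?_⟩
  rcases Nat.lt_or_ge σ (s + k) with hσ | hσ
  · exact h.2 σ h₁ hσ
  · rwa [show σ = s + k by omega]

theorem congr (h : PulseThenSilent a s k) (hab : ∀ σ, s ≤ σ → a σ = b σ) :
    PulseThenSilent b s k :=
  ⟨hab s le_rfl ▸ h.1, fun σ h₁ h₂ => hab σ h₁.le ▸ h.2 σ h₁ h₂⟩

end PulseThenSilent

section PhaseCounter

variable {TC : ℕ} {a : ℕ → ℕ} {d : ℕ → Option ℕ}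

theorem phase_eq_of_pulseThenSilent (hd : ∀ t, 1 ≤ t → d (t + 1) = phaseStep TC (a t) (d t))
    {s k : ℕ} (hs : 1 ≤ s) (hk : 1 ≤ k) (hkTC : k ≤ TC) (h : PulseThenSilent a s k) :
    d (s + k) = some k := by
  induction k, hk using Nat.le_induction with
  | base => exact (hd s hs).trans (phaseStep_eq_some_succ_iff.2 (.inl ⟨h.1, rfl⟩))
  | succ k hk ih =>
    have hsk : a (s + k) = 0 := h.2 _ (by omega) (by omega)
    exact (hd (s + k) (by omega)).trans <| phaseStep_eq_some_succ_iff.2 <|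
      .inr ⟨by omega, ih (by omega) (h.mono (by omega)), by omega⟩

theorem pulseThenSilent_of_phase_eq (hd : ∀ t, 1 ≤ t → d (t + 1) = phaseStep TC (a t) (d t))
    (hbit : ∀ t, a t = 0 ∨ a t = 1) (hd0 : ∀ t, d t ≠ some 0) {s k : ℕ} (hs : 1 ≤ s)
    (hk : 1 ≤ k) (h : d (s + k) = some k) : PulseThenSilent a s k := by
  induction k, hk using Nat.le_induction with
  | base =>
    rcases phaseStep_eq_some_succ_iff.1 ((hd s hs).symm.trans h) with ⟨hpulse, -⟩ | ⟨-, h0, -⟩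
    · exact ⟨hpulse, fun σ h₁ h₂ => by omega⟩
    · exact absurd h0 (hd0 s)
  | succ k hk ih =>
    rcases phaseStep_eq_some_succ_iff.1 ((hd (s + k) (by omega)).symm.trans h) with
      ⟨-, hk0⟩ | ⟨hpulse, hdk, -⟩
    · omega
    · exact (ih hdk).succ ((hbit _).resolve_right hpulse)

theorem phase_eq_some_iff (hd : ∀ t, 1 ≤ t → d (t + 1) = phaseStep TC (a t) (d t))
    (hbit : ∀ t, a t = 0 ∨ a t = 1) (hd0 : ∀ t, d t ≠ some 0) {s k : ℕ} (hs : 1 ≤ s)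
    (hk : 1 ≤ k) (hkTC : k ≤ TC) : d (s + k) = some k ↔ PulseThenSilent a s k :=
  ⟨pulseThenSilent_of_phase_eq hd hbit hd0 hs hk, phase_eq_of_pulseThenSilent hd hs hk hkTC⟩

end PhaseCounter

theorem counter_add_of_forall_eq {Ψ : ℕ} {c c' : ℕ → ℕ}
    (hc : ∀ t, 1 ≤ t → c (t + 1) = (c' t + 1) % Ψ) {s k : ℕ} (hs : 1 ≤ s) (hk : 1 ≤ k)
    (hfree : ∀ σ, s < σ → σ < s + k → c' σ = c σ) : c (s + k) = (c' s + k) % Ψ := by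
  induction k, hk using Nat.le_induction with
  | base => exact hc s hs
  | succ k hk ih =>
    rw [← Nat.add_assoc, hc _ (by omega), hfree _ (by omega) (by omega),
      ih fun σ h₁ h₂ => hfree σ h₁ (by omega), Nat.mod_add_mod, Nat.add_assoc]

section Network

variable {V : Type*} {F : Set V} {Ψ TC t0 : ℕ} {a c c' : V → ℕ → ℕ} {d : V → ℕ → Option ℕ}
  {Y : ℕ → V → ℕ}

theorem phase_eq_some_iff_forall_pulseThenSilent
    (hd : ∀ v ∉ F, ∀ t, 1 ≤ t → d v (t + 1) = phaseStep TC (a v t) (d v t))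
    (hbit : ∀ v ∉ F, ∀ t, a v t = 0 ∨ a v t = 1) (hd0 : ∀ v ∉ F, ∀ t, d v t ≠ some 0)
    (hstable : ∀ t, t0 ≤ t → ∀ v ∉ F, ∀ w ∉ F, a v t = a w t) (hTC : 1 ≤ TC) {s : ℕ}
    (hs : 1 ≤ s) (hs0 : t0 ≤ s) {v : V} (hv : v ∉ F) :
    d v (s + TC) = some TC ↔ ∀ w ∉ F, PulseThenSilent (a w) s TC := by
  rw [phase_eq_some_iff (hd v hv) (hbit v hv) (hd0 v hv) hs hTC le_rfl]
  exact ⟨fun h w hw => h.congr fun σ hσ => hstable σ (by omega) v hv w hw, fun h => h v hv⟩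

theorem tentative_agree
    (hc : ∀ v ∉ F, ∀ t, 1 ≤ t → c v (t + 1) = (c' v t + 1) % Ψ)
    (hc' : ∀ v ∉ F, ∀ t, 1 ≤ t →
      c' v t = if d v t = some TC then (Y (t - TC) v + TC) % Ψ else c v t)
    (hdone : ∀ s, t0 ≤ s → ∀ v ∉ F,
      d v (s + TC) = some TC ↔ ∀ w ∉ F, PulseThenSilent (a w) s TC)
    (hY : ∀ s, t0 ≤ s → (∀ w ∉ F, PulseThenSilent (a w) s TC) →
      ∀ v ∉ F, ∀ w ∉ F, Y s v = Y s w)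
    (hinit : ∀ v ∉ F, PulseThenSilent (a v) t0 TC) (ht0 : 1 ≤ t0) :
    ∀ t, t0 + TC ≤ t → ∀ v ∉ F, ∀ w ∉ F, c' v t = c' w t := by
  have hfinish : ∀ s, t0 ≤ s → (∀ w ∉ F, PulseThenSilent (a w) s TC) →
      ∀ v ∉ F, ∀ w ∉ F, c' v (s + TC) = c' w (s + TC) := by
    intro s hs hsync v hv w hw
    rw [hc' v hv _ (by omega), if_pos ((hdone s hs v hv).2 hsync), hc' w hw _ (by omega),
      if_pos ((hdone s hs w hw).2 hsync), Nat.add_sub_cancel, hY s hs hsync v hv w hw]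
  suffices h : ∀ s, t0 ≤ s → ∀ v ∉ F, ∀ w ∉ F, c' v (s + TC) = c' w (s + TC) by
    intro t ht
    simpa only [Nat.sub_add_cancel (le_of_add_le_right ht)] using h (t - TC) (by omega)
  intro s hs
  induction s, hs using Nat.le_induction with
  | base => exact hfinish t0 le_rfl hinit
  | succ s hs ih =>
    by_cases hsync : ∀ w ∉ F, PulseThenSilent (a w) (s + 1) TC
    · exact hfinish (s + 1) (by omega) hsync
    intro v hv w hw
    rw [hc' v hv _ (by omega), if_neg (mt (hdone _ (by omega) v hv).1 hsync),
      hc' w hw _ (by omega), if_neg (mt (hdone _ (by omega) w hw).1 hsync),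
      show s + 1 + TC = s + TC + 1 by omega, hc v hv _ (by omega), hc w hw _ (by omega),
      ih v hv w hw]

theorem tentative_eq_counter
    (hd : ∀ v ∉ F, ∀ t, 1 ≤ t → d v (t + 1) = phaseStep TC (a v t) (d v t))
    (hc : ∀ v ∉ F, ∀ t, 1 ≤ t → c v (t + 1) = (c' v t + 1) % Ψ)
    (hc' : ∀ v ∉ F, ∀ t, 1 ≤ t →
      c' v t = if d v t = some TC then (Y (t - TC) v + TC) % Ψ else c v t)
    (hdone : ∀ s, t0 ≤ s → ∀ v ∉ F,
      d v (s + TC) = some TC ↔ ∀ w ∉ F, PulseThenSilent (a w) s TC)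
    (hY : ∀ s, t0 ≤ s → (∀ w ∉ F, PulseThenSilent (a w) s TC) →
      ∀ x, (∀ v ∉ F, c' v s = x) → ∀ v ∉ F, Y s v = x)
    (hagree : ∀ t, t0 + TC ≤ t → ∀ v ∉ F, ∀ w ∉ F, c' v t = c' w t)
    (hsilent : ∀ v ∉ F, ∀ t, t0 < t → t < t0 + TC → a v t = 0) (hTC : 1 ≤ TC) :
    ∀ t, t0 + TC + 1 ≤ t → ∀ v ∉ F, c' v t = c v t := by
  intro t ht v hv
  rw [hc' v hv t (by omega), ite_eq_right_iff]
  intro hdv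
  obtain ⟨s, rfl⟩ : ∃ s, t = s + TC := ⟨t - TC, by omega⟩
  have hsync := (hdone s (by omega) v hv).1 hdv
  have hs : t0 + TC ≤ s := by
    by_contra
    have := hsilent v hv s (by omega) (by omega)
    have := (hsync v hv).1
    omega
  have hYs : Y s v = c' v s := hY s (by omega) hsync _ (fun w hw => hagree s hs w hw v hv) v hv
  rw [Nat.add_sub_cancel, hYs, counter_add_of_forall_eq (hc v hv) (by omega) hTC]
  intro σ h₁ h₂
  have hdσ := phase_eq_of_pulseThenSilent (hd v hv) (k := σ - s) (by omega) (by omega) (by omega)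
    ((hsync v hv).mono (by omega))
  rw [Nat.add_sub_cancel' h₁.le] at hdσ
  rw [hc' v hv σ (by omega), if_neg (by rw [hdσ]; simp only [Option.some.injEq]; omega)]

end Network

theorem strong_pulser_counter {V : Type*} (F : Set V)
    (Ψ TC Φ : ℕ) (hTC : 1 ≤ TC) (hΦ : TC ≤ Φ)
    (a : V → ℕ → ℕ) (c c' : V → ℕ → ℕ) (d : V → ℕ → Option ℕ) (Y : ℕ → V → ℕ)
    -- the weak `Φ`-pulser output and its stabilisation round `t0 ≤ T_W`:
    (habits : ∀ v, v ∉ F → ∀ t, a v t = 0 ∨ a v t = 1)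
    (t0 : ℕ) (ht0l : 1 ≤ t0)
    (hW1 : ∀ t, t0 ≤ t → ∀ v, v ∉ F → ∀ w, w ∉ F → a v t = a w t)
    (hW2 : ∀ v, v ∉ F → a v t0 = 1)
    (hW3 : ∀ v, v ∉ F → ∀ t, t0 < t → t < t0 + Φ → a v t = 0)
    -- the consensus oracle: outputs in range, and agreement/validity for
    -- every start round `s ≥ t0` followed by `T_C − 1` rounds of silence:
    (hY : ∀ s, t0 ≤ s → (∀ v, v ∉ F → a v s = 1) →
      (∀ v, v ∉ F → ∀ σ, s < σ → σ < s + TC → a v σ = 0) →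
      (∀ v, v ∉ F → ∀ w, w ∉ F → Y s v = Y s w) ∧
      (∀ x, (∀ v, v ∉ F → c' v s = x) → ∀ v, v ∉ F → Y s v = x))
    -- the algorithm, for every correct node and round `t ≥ 1`:
    (hdrange : ∀ v, v ∉ F → ∀ t,
      d v t = none ∨ ∃ ρ, d v t = some ρ ∧ 1 ≤ ρ ∧ ρ ≤ TC)
    (hd : ∀ v, v ∉ F → ∀ t, 1 ≤ t →
      d v (t + 1) =
        if a v t = 1 then some 1
        else match d v t with
          | some ρ => if ρ < TC then some (ρ + 1) else none
          | none => none)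
    (hc' : ∀ v, v ∉ F → ∀ t, 1 ≤ t →
      c' v t = if d v t = some TC then (Y (t - TC) v + TC) % Ψ else c v t)
    (hc : ∀ v, v ∉ F → ∀ t, 1 ≤ t → c v (t + 1) = (c' v t + 1) % Ψ) :
    ∀ t, t0 + TC + 1 ≤ t →
      (∀ v, v ∉ F → ∀ w, w ∉ F → c v t = c w t) ∧
      (∀ v, v ∉ F → c v (t + 1) = (c v t + 1) % Ψ) := by
  have hstep : ∀ v ∉ F, ∀ t, 1 ≤ t → d v (t + 1) = phaseStep TC (a v t) (d v t) := by
    intro v hv t ht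
    rw [hd v hv t ht, phaseStep]
    cases d v t <;> rfl
  have hd0 : ∀ v ∉ F, ∀ t, d v t ≠ some 0 := by
    intro v hv t h
    rcases hdrange v hv t with h' | ⟨ρ, h', hρ, -⟩
    · simp [h] at h'
    · rw [h, Option.some.injEq] at h'; omega
  have hsilent : ∀ v ∉ F, ∀ t, t0 < t → t < t0 + TC → a v t = 0 :=
    fun v hv t h₁ h₂ => hW3 v hv t h₁ (by omega)
  have hdone : ∀ s, t0 ≤ s → ∀ v ∉ F,
      d v (s + TC) = some TC ↔ ∀ w ∉ F, PulseThenSilent (a w) s TC := fun s hs v hv =>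
    phase_eq_some_iff_forall_pulseThenSilent hstep habits hd0 hW1 hTC (by omega) hs hv
  have hY' : ∀ s, t0 ≤ s → (∀ w ∉ F, PulseThenSilent (a w) s TC) → _ := fun s hs hsync =>
    hY s hs (fun w hw => (hsync w hw).1) fun w hw => (hsync w hw).2
  have hagree := tentative_agree hc hc' hdone (fun s hs h => (hY' s hs h).1)
    (fun v hv => ⟨hW2 v hv, hsilent v hv⟩) ht0l
  have hcounter := tentative_eq_counter hstep hc hc' hdone (fun s hs h => (hY' s hs h).2) hagree
    hsilent hTC
  intro t ht
  refine ⟨fun v hv w hw => ?_, fun v hv => by rw [hc v hv t (by omega), hcounter t ht v hv]⟩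
  obtain ⟨u, rfl⟩ : ∃ u, t = u + 1 := ⟨t - 1, by omega⟩
  rw [hc v hv u (by omega), hc w hw u (by omega), hagree u (by omega) v hv w hw]
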